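/- arXiv:2110.06401 — 2 statements merged into one kernel-verified Lean document; each statement's English description precedes it below -/
import Mathlib

section
/- Let V = {1,…,n} and let (E_t)_{t∈ℕ} be a uniformly B-connected sequence of undirected edge sets on V. For a mini-batch originating at node j at time τ, set k₀ = ⌈τ/B⌉. Then for every k ≥ 0 the informed set satisfies |A_{(k₀+k)B}| ≥ min(n, k + 1). -/
/-!
Once the batch has been released, every window `[mB, (m+1)B)` with `τ ≤ mB` has a connected
union graph, so unless everybody is already informed, some edge of that window leaves the
informed set `A_{mB}`; flooding uses it, hence `|A_{(m+1)B}| > |A_{mB}|`. Starting from the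
window `k₀ = ⌈τ/B⌉`, which begins at or after `τ` and in which `A` contains `j`, the informed
set thus gains a node per window until it is all of `V`.
-/

open Set

/-- The union graph of the time-varying graph `E` over the window
`[k*B, (k+1)*B)`. -/
def windowGraph {n : ℕ} (E : ℕ → SimpleGraph (Fin n)) (B k : ℕ) :
    SimpleGraph (Fin n) :=
  ⨆ t ∈ Finset.Ico (k * B) ((k + 1) * B), E t

def IsFlooding {V : Type*} (E : ℕ → SimpleGraph V) (τ : ℕ) (A : ℕ → Set V) : Prop :=
  ∀ t, τ ≤ t → A (t + 1) = A t ∪ {i | ∃ r ∈ A t, (E t).Adj i r}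

namespace IsFlooding

variable {V : Type*} {E : ℕ → SimpleGraph V} {τ : ℕ} {A : ℕ → Set V}

theorem monotoneOn (hA : IsFlooding E τ A) : MonotoneOn A {t | τ ≤ t} :=
  monotoneOn_nat_Ici_of_le_succ fun t ht ↦ (hA t ht).symm ▸ subset_union_left

theorem mem_succ_of_adj (hA : IsFlooding E τ A) {t : ℕ} (ht : τ ≤ t) {i r : V}
    (hr : r ∈ A t) (hadj : (E t).Adj r i) : i ∈ A (t + 1) := by
  rw [hA t ht]
  exact Or.inr ⟨r, hr, hadj.symm⟩

theorem ssubset_of_preconnected {a b : ℕ} (hA : IsFlooding E τ A) (hτa : τ ≤ a) (hab : a ≤ b)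
    (hconn : (⨆ t ∈ Finset.Ico a b, E t).Preconnected) (hne : (A a).Nonempty)
    (hfull : A a ≠ univ) : A a ⊂ A b := by
  obtain ⟨u, hu⟩ := hne
  obtain ⟨v, hv⟩ := (ne_univ_iff_exists_notMem _).1 hfull
  obtain ⟨d, -, hd_fst, hd_snd⟩ := (hconn u v).some.exists_boundary_dart (A a) hu hv
  obtain ⟨t, ht, hadj⟩ : ∃ t ∈ Finset.Ico a b, (E t).Adj d.fst d.snd := by
    simpa only [SimpleGraph.iSup_adj, exists_prop] using d.adj
  rw [Finset.mem_Ico] at ht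
  have hτt : τ ≤ t := hτa.trans ht.1
  have hsnd : d.snd ∈ A (t + 1) :=
    hA.mem_succ_of_adj hτt (hA.monotoneOn hτa hτt ht.1 hd_fst) hadj
  refine (ssubset_iff_of_subset (hA.monotoneOn hτa (hτa.trans hab) hab)).2 ⟨d.snd, ?_, hd_snd⟩
  exact hA.monotoneOn (hτt.trans t.le_succ) (hτa.trans hab) ht.2 hsnd

end IsFlooding

theorem min_card_succ_le_ncard {V : Type*} [Fintype V] {s : ℕ → Set V} (hs : Monotone s)
    (hne : (s 0).Nonempty) (hgrow : ∀ k, s k ≠ univ → s k ⊂ s (k + 1)) :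
    ∀ k, min (Fintype.card V) (k + 1) ≤ (s k).ncard := by
  intro k
  induction k with
  | zero => exact (min_le_right _ _).trans ((ncard_pos).2 hne)
  | succ k ih =>
    by_cases hfull : s k = univ
    · have : s (k + 1) = univ := eq_univ_of_univ_subset (hfull ▸ hs k.le_succ)
      rw [this, ncard_univ, Nat.card_eq_fintype_card]
      exact min_le_left _ _
    · have := ncard_lt_ncard (hgrow k hfull)
      omega

/-- For a uniformly `B`-connected time-varying graph on
`V = {1,…,n}` and a flooding mini-batch released by node `j` at time `τ`,
with `k₀ = ⌈τ/B⌉`, the informed set satisfies `|A_{(k₀+k)B}| ≥ min (n, k+1)`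
for every `k ≥ 0`. -/
theorem flooding_card_growth (n B : ℕ) (hB : 0 < B)
    (E : ℕ → SimpleGraph (Fin n))
    (hconn : ∀ k : ℕ, (windowGraph E B k).Connected)
    (j : Fin n) (τ : ℕ) (A : ℕ → Set (Fin n))
    (hA0 : A τ = {j})
    (hAstep : ∀ t, τ ≤ t →
      A (t + 1) = A t ∪ {i | ∃ r ∈ A t, (E t).Adj i r}) :
    ∀ k : ℕ, min n (k + 1) ≤ (A ((τ ⌈/⌉ B + k) * B)).ncard := by
  have hA : IsFlooding E τ A := hAstep
  set k₀ := τ ⌈/⌉ B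
  have hτ : ∀ k, τ ≤ (k₀ + k) * B := fun k ↦ calc
    τ ≤ B * k₀ := (gc_mul_ceilDiv hB).le_u_l τ
    _ ≤ (k₀ + k) * B := by nlinarith
  have hj : ∀ k, j ∈ A ((k₀ + k) * B) := fun k ↦
    hA.monotoneOn (le_refl τ) (hτ k) (hτ k) (hA0 ▸ rfl)
  have hgrow : ∀ k, A ((k₀ + k) * B) ≠ univ → A ((k₀ + k) * B) ⊂ A ((k₀ + (k + 1)) * B) := by
    intro k hfull
    rw [← add_assoc]
    exact hA.ssubset_of_preconnected (hτ k) (Nat.mul_le_mul_right B (by omega))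
      (hconn (k₀ + k)).preconnected ⟨j, hj k⟩ hfull
  simpa only [Fintype.card_fin] using
    min_card_succ_le_ncard (fun k l hkl ↦ hA.monotoneOn (hτ k) (hτ l) (by gcongr)) ⟨j, hj 0⟩ hgrow
end

section
/- Let V = {1,…,n} and let (E_t)_{t∈ℕ} be a uniformly B-connected sequence of undirected edge sets on V. Let (W_t)_{t∈ℕ} be n×n real matrices such that each W_t has nonnegative entries, strictly positive diagonal entries, and for i ≠ j satisfies [W_t]_{ij} > 0 if and only if (i,j) ∈ E_t. Then for every τ ∈ ℕ, every entry of the product W_{t*−1} W_{t*−2} ⋯ W_τ is strictly positive, where t* = (⌈τ/B⌉ + (n − 1))B. -/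
/-- The backward matrix product `W (t-1) * W (t-2) * ⋯ * W τ`
(the identity matrix when `t ≤ τ`). -/
def backProd {n : ℕ} (W : ℕ → Matrix (Fin n) (Fin n) ℝ) (τ t : ℕ) :
    Matrix (Fin n) (Fin n) ℝ :=
  ((List.range (t - τ)).map fun s => W (t - 1 - s)).prod

open Finset

theorem Finset.eq_univ_of_exists_mem_succ_notMem {α : Type*} [Fintype α] {s : ℕ → Finset α}
    (hs : Monotone s) (h0 : (s 0).Nonempty)
    (hgrow : ∀ k, s k ≠ univ → ∃ a ∈ s (k + 1), a ∉ s k) :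
    s (Fintype.card α - 1) = univ := by
  have hcard : ∀ k, min (Fintype.card α) (k + 1) ≤ #(s k) := by
    intro k
    induction k with
    | zero => exact (min_le_right _ _).trans h0.card_pos
    | succ k ih =>
      by_cases hk : s k = univ
      · have : s (k + 1) = univ := univ_subset_iff.mp (hk ▸ hs (by omega : k ≤ k + 1))
        simp [this]
      · obtain ⟨a, ha, hak⟩ := hgrow k hk
        have hlt : #(s k) < #(s (k + 1)) :=
          card_lt_card (ssubset_of_subset_of_ne (hs (by omega)) fun h => hak (h ▸ ha))
        omega
  have hpos : 0 < Fintype.card α := h0.card_pos.trans_le (s 0).card_le_univ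
  rw [← card_eq_iff_eq_univ]
  exact le_antisymm (card_le_univ _)
    (by simpa [Nat.sub_add_cancel hpos] using hcard (Fintype.card α - 1))

namespace Matrix

variable {ι R : Type*} [Fintype ι] [Semiring R] [PartialOrder R]

theorem mul_apply_nonneg [IsOrderedRing R] {A B : Matrix ι ι R} (hA : ∀ i j, 0 ≤ A i j)
    (hB : ∀ i j, 0 ≤ B i j) (i j : ι) : 0 ≤ (A * B) i j :=
  sum_nonneg fun l _ => mul_nonneg (hA i l) (hB l j)

theorem mul_apply_pos [IsStrictOrderedRing R] {A B : Matrix ι ι R} (hA : ∀ i j, 0 ≤ A i j)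
    (hB : ∀ i j, 0 ≤ B i j) {i l j : ι} (hil : 0 < A i l) (hlj : 0 < B l j) :
    0 < (A * B) i j :=
  sum_pos' (fun k _ => mul_nonneg (hA i k) (hB k j)) ⟨l, mem_univ l, mul_pos hil hlj⟩

end Matrix

section backProd

variable {n : ℕ} {W : ℕ → Matrix (Fin n) (Fin n) ℝ} {τ t t' : ℕ}

theorem backProd_self (W : ℕ → Matrix (Fin n) (Fin n) ℝ) (τ : ℕ) :
    backProd W τ τ = 1 := by
  simp [backProd]

theorem backProd_succ (W : ℕ → Matrix (Fin n) (Fin n) ℝ) (h : τ ≤ t) :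
    backProd W τ (t + 1) = W t * backProd W τ t := by
  rw [backProd, backProd, show t + 1 - τ = t - τ + 1 by omega, List.range_succ_eq_map,
    List.map_cons, List.prod_cons, List.map_map]
  congr 3
  funext s
  simp only [Function.comp_apply]
  congr 1
  omega

theorem backProd_nonneg (hW : ∀ t i j, 0 ≤ W t i j) (h : τ ≤ t) (i j : Fin n) :
    0 ≤ backProd W τ t i j := by
  induction t, h using Nat.le_induction generalizing i j with
  | base =>
    rw [backProd_self, Matrix.one_apply]
    split_ifs <;> norm_num
  | succ t h ih =>
    rw [backProd_succ W h]
    exact Matrix.mul_apply_nonneg (hW t) ih i j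

theorem backProd_succ_apply_pos (hW : ∀ t i j, 0 ≤ W t i j) (h : τ ≤ t) {i l j : Fin n}
    (hil : 0 < W t i l) (hlj : 0 < backProd W τ t l j) : 0 < backProd W τ (t + 1) i j := by
  rw [backProd_succ W h]
  exact Matrix.mul_apply_pos (hW t) (backProd_nonneg hW h) hil hlj

theorem backProd_apply_pos_of_le (hW : ∀ t i j, 0 ≤ W t i j) (hWdiag : ∀ t i, 0 < W t i i)
    (h : τ ≤ t) (ht : t ≤ t') {i j : Fin n} (hpos : 0 < backProd W τ t i j) :
    0 < backProd W τ t' i j := by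
  induction t', ht using Nat.le_induction with
  | base => exact hpos
  | succ t' ht ih => exact backProd_succ_apply_pos hW (h.trans ht) (hWdiag t' i) ih

theorem backProd_apply_self_pos (hW : ∀ t i j, 0 ≤ W t i j) (hWdiag : ∀ t i, 0 < W t i i)
    (h : τ ≤ t) (j : Fin n) : 0 < backProd W τ t j j :=
  backProd_apply_pos_of_le hW hWdiag le_rfl h (by simp [backProd_self])

theorem exists_backProd_apply_pos_window {E : ℕ → SimpleGraph (Fin n)} {B k : ℕ}
    (hconn : (windowGraph E B k).Connected) (hW : ∀ t i j, 0 ≤ W t i j)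
    (hWdiag : ∀ t i, 0 < W t i i) (hWadj : ∀ t i j, (E t).Adj i j → 0 < W t i j)
    (h : τ ≤ k * B) {u j : Fin n} (hu : ¬ 0 < backProd W τ (k * B) u j) :
    ∃ b, ¬ 0 < backProd W τ (k * B) b j ∧ 0 < backProd W τ ((k + 1) * B) b j := by
  obtain ⟨p⟩ := hconn.preconnected j u
  obtain ⟨d, -, ha, hb⟩ := p.exists_boundary_dart {i | 0 < backProd W τ (k * B) i j}
    (backProd_apply_self_pos hW hWdiag h j) hu
  obtain ⟨t, ht, hadj⟩ : ∃ t ∈ Ico (k * B) ((k + 1) * B), (E t).Adj d.fst d.snd := by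
    simpa [windowGraph] using d.adj
  rw [mem_Ico] at ht
  have hτt : τ ≤ t := h.trans ht.1
  refine ⟨d.snd, hb, backProd_apply_pos_of_le hW hWdiag (hτt.trans t.le_succ) ht.2 ?_⟩
  exact backProd_succ_apply_pos hW hτt (hWadj t _ _ hadj.symm)
    (backProd_apply_pos_of_le hW hWdiag h ht.1 ha)

end backProd

theorem backProd_entrywise_pos_general (n B : ℕ) (hB : 0 < B)
    (E : ℕ → SimpleGraph (Fin n))
    (hconn : ∀ k : ℕ, (windowGraph E B k).Connected)
    (W : ℕ → Matrix (Fin n) (Fin n) ℝ)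
    (hWnonneg : ∀ t i j, 0 ≤ W t i j)
    (hWdiag : ∀ t i, 0 < W t i i)
    (hWadj : ∀ t, ∀ i j : Fin n, i ≠ j → (0 < W t i j ↔ (E t).Adj i j))
    (τ : ℕ) :
    ∀ i j : Fin n, 0 < backProd W τ ((τ ⌈/⌉ B + (n - 1)) * B) i j := by
  intro i j
  set c := τ ⌈/⌉ B
  have hτ : ∀ k, τ ≤ (c + k) * B := fun k =>
    calc τ ≤ B • c := le_smul_ceilDiv hB
      _ ≤ (c + k) * B := by rw [smul_eq_mul, mul_comm]; gcongr; omega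
  let s : ℕ → Finset (Fin n) := fun k => {i | 0 < backProd W τ ((c + k) * B) i j}
  have hmono : Monotone s := monotone_nat_of_le_succ fun k i hi => by
    simp only [s, mem_filter, mem_univ, true_and] at hi ⊢
    exact backProd_apply_pos_of_le hWnonneg hWdiag (hτ k) (by gcongr; omega) hi
  have hgrow : ∀ k, s k ≠ univ → ∃ a ∈ s (k + 1), a ∉ s k := by
    intro k hk
    obtain ⟨u, hu⟩ := not_forall.mp (mt eq_univ_iff_forall.mpr hk)
    simp only [s, mem_filter, mem_univ, true_and] at hu ⊢
    simpa [add_assoc, and_comm] using exists_backProd_apply_pos_window (hconn (c + k)) hWnonneg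
      hWdiag (fun t i j h => (hWadj t i j h.ne).2 h) (hτ k) hu
  have hj : j ∈ s 0 := by
    simpa [s] using backProd_apply_self_pos hWnonneg hWdiag (hτ 0) j
  have huniv := eq_univ_of_exists_mem_succ_notMem hmono ⟨j, hj⟩ hgrow
  rw [Fintype.card_fin] at huniv
  have hi : i ∈ s (n - 1) := huniv ▸ mem_univ i
  simpa [s] using hi

/-- For a uniformly `B`-connected time-varying graph on
`V = {1,…,n}` and weight matrices `W t` that are nonnegative, have strictly
positive diagonal, and whose off-diagonal positivity pattern matches `E t`,
every entry of the backward product `W (t*-1) ⋯ W τ` is strictly positive,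
where `t* = (⌈τ/B⌉ + (n-1))·B`. -/
theorem backProd_entrywise_pos (n B : ℕ) (hn : 1 ≤ n) (hB : 0 < B)
    (E : ℕ → SimpleGraph (Fin n))
    (hconn : ∀ k : ℕ, (windowGraph E B k).Connected)
    (W : ℕ → Matrix (Fin n) (Fin n) ℝ)
    (hWnonneg : ∀ t i j, 0 ≤ W t i j)
    (hWdiag : ∀ t i, 0 < W t i i)
    (hWadj : ∀ t, ∀ i j : Fin n, i ≠ j → (0 < W t i j ↔ (E t).Adj i j))
    (τ : ℕ) :
    ∀ i j : Fin n, 0 < backProd W τ ((τ ⌈/⌉ B + (n - 1)) * B) i j :=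
  backProd_entrywise_pos_general n B hB E hconn W hWnonneg hWdiag hWadj τ
end
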